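/- arXiv:2006.05742 — 3 statements merged into one kernel-verified Lean document; each statement's English description precedes it below -/
import Mathlib

section
/- Let m be a centered Borel probability measure on ℝ and let Γ_m ⊆ ℝ be the closed sub-semigroup generated by the support of m. If Γ_m is discrete, then Γ_m is a subgroup of ℝ; if Γ_m is not discrete, then Γ_m is dense in ℝ. -/
open MeasureTheory

/-- The topological support of a measure on `ℝ`: points all of whose neighbourhoods have
positive measure. -/
def measSupport (m : Measure ℝ) : Set ℝ := {x | ∀ U ∈ nhds x, m U ≠ 0}

/-- The closed sub-semigroup of `ℝ` generated by the support of `m`. -/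
def GammaM (m : Measure ℝ) : Set ℝ :=
  closure (AddSubsemigroup.closure (measSupport m) : Set ℝ)

lemma aux_compl_null (m : Measure ℝ) : m (measSupport m)ᶜ = 0 := by
  apply measure_null_of_locally_null
  intro x hx
  simp only [measSupport, Set.mem_compl_iff, Set.mem_setOf_eq, not_forall] at hx
  obtain ⟨U, hU, hU0⟩ := hx
  push_neg at hU0
  exact ⟨U, nhdsWithin_le_nhds hU, hU0⟩

lemma aux_supp_nonempty (m : Measure ℝ) [IsProbabilityMeasure m] : (measSupport m).Nonempty := by
  by_contra h
  rw [Set.not_nonempty_iff_eq_empty] at h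
  have := aux_compl_null m
  rw [h, Set.compl_empty] at this
  simp [measure_univ] at this

lemma aux_ae_zero (m : Measure ℝ) [IsProbabilityMeasure m]
    (hint : Integrable (fun t : ℝ => t) m) (hmean : ∫ t, t ∂m = 0)
    (h : m {t : ℝ | t < 0} = 0 ∨ m {t : ℝ | 0 < t} = 0) : m {t : ℝ | t ≠ 0} = 0 := by
  rcases h with h | h
  · have hf : 0 ≤ᵐ[m] (fun t : ℝ => t) := by
      rw [Filter.EventuallyLE, ae_iff]
      refine measure_mono_null ?_ h
      intro t ht
      simp only [Set.mem_setOf_eq, Pi.zero_apply, not_le] at ht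
      exact ht
    have := (integral_eq_zero_iff_of_nonneg_ae hf hint).mp hmean
    rw [Filter.EventuallyEq, ae_iff] at this
    refine measure_mono_null ?_ this
    intro t ht
    simpa using ht
  · have hf : 0 ≤ᵐ[m] (fun t : ℝ => -t) := by
      rw [Filter.EventuallyLE, ae_iff]
      refine measure_mono_null ?_ h
      intro t ht
      simp only [Set.mem_setOf_eq, Pi.zero_apply, not_le, neg_lt, neg_zero] at ht
      simpa using ht
    have hmean' : ∫ t, -t ∂m = 0 := by rw [integral_neg, hmean, neg_zero]
    have := (integral_eq_zero_iff_of_nonneg_ae hf hint.neg).mp hmean'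
    rw [Filter.EventuallyEq, ae_iff] at this
    refine measure_mono_null ?_ this
    intro t ht
    simp only [Set.mem_setOf_eq, Pi.zero_apply, neg_eq_zero]
    simpa using ht

lemma aux_supp_dichotomy (m : Measure ℝ) [IsProbabilityMeasure m]
    (hint : Integrable (fun t : ℝ => t) m) (hmean : ∫ t, t ∂m = 0) :
    measSupport m = {0} ∨ ((∃ a ∈ measSupport m, 0 < a) ∧ ∃ b ∈ measSupport m, b < 0) := by
  have hzero : (m {t : ℝ | t < 0} = 0 ∨ m {t : ℝ | 0 < t} = 0) → measSupport m = {0} := by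
    intro h
    have hne := aux_ae_zero m hint hmean h
    have hsub : measSupport m ⊆ {0} := by
      intro x hx
      by_contra hx0
      simp only [Set.mem_singleton_iff] at hx0
      exact hx {(0:ℝ)}ᶜ (isOpen_compl_singleton.mem_nhds hx0) (measure_mono_null (fun t ht => by simpa using ht) hne)
    obtain ⟨x, hx⟩ := aux_supp_nonempty m
    have := hsub hx
    rw [Set.eq_singleton_iff_unique_mem]
    exact ⟨this ▸ hx, fun y hy => hsub hy⟩
  by_cases hpos : ∃ a ∈ measSupport m, 0 < a
  · by_cases hneg : ∃ b ∈ measSupport m, b < 0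
    · exact Or.inr ⟨hpos, hneg⟩
    · left
      apply hzero
      left
      push_neg at hneg
      apply measure_mono_null _ (aux_compl_null m)
      intro t ht
      simp only [Set.mem_setOf_eq] at ht
      intro hts
      exact absurd ht (not_lt.mpr (le_of_not_gt (fun hlt => absurd (hneg t hts) (not_le.mpr hlt))))
  · left
    apply hzero
    right
    push_neg at hpos
    apply measure_mono_null _ (aux_compl_null m)
    intro t ht
    simp only [Set.mem_setOf_eq] at ht
    intro hts
    exact absurd (hpos t hts) (not_le.mpr ht)


/-- nsmul of elements stays in an additive-closed set, for n ≥ 1 -/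
lemma aux_nsmul_mem {S : Set ℝ} (hS : ∀ x ∈ S, ∀ y ∈ S, x + y ∈ S)
    {x : ℝ} (hx : x ∈ S) : ∀ n : ℕ, 1 ≤ n → (n : ℝ) * x ∈ S := by
  have key : ∀ n : ℕ, ((n:ℝ) + 1) * x ∈ S := by
    intro n
    induction n with
    | zero => simpa using hx
    | succ k ih =>
      have := hS _ ih _ hx
      have e : ((↑(k+1):ℝ) + 1) * x = ((k:ℝ) + 1) * x + x := by push_cast; ring
      rw [e]; exact this
  intro n hn
  obtain ⟨k, rfl⟩ : ∃ k, n = k + 1 := ⟨n - 1, by omega⟩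
  have := key k
  have e : ((↑(k+1)):ℝ) = (k:ℝ) + 1 := by push_cast; ring
  rw [e]; exact this

/-- Density lemma: closed semigroup with arbitrarily small positive elements and a
negative element is everything. -/
lemma aux_dense {S : Set ℝ} (hS : ∀ x ∈ S, ∀ y ∈ S, x + y ∈ S) (hcl : IsClosed S)
    (hsmall : ∀ ε > (0:ℝ), ∃ p ∈ S, 0 < p ∧ p < ε) {b : ℝ} (hb : b ∈ S) (hb0 : b < 0) :
    S = Set.univ := by
  have hdense : Dense S := by
    rw [Metric.dense_iff]
    intro x ε hε
    obtain ⟨p, hpS, hp0, hpε⟩ := hsmall ε hε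
    -- choose n with n * b < x, n ≥ 1
    obtain ⟨n0, hn0⟩ := exists_nat_gt (x / b)
    set n : ℕ := max n0 1 with hn
    have hn1 : 1 ≤ n := le_max_right _ _
    have hnb : (n:ℝ) * b < x := by
      have hngt : (x / b) < (n:ℝ) := lt_of_lt_of_le hn0 (by exact_mod_cast le_max_left n0 1)
      have := mul_lt_mul_of_neg_right hngt hb0
      calc (n:ℝ) * b < (x / b) * b := by linarith [mul_lt_mul_of_neg_right hngt hb0]
        _ = x := div_mul_cancel₀ x (ne_of_lt hb0)
    have hnbS : (n:ℝ) * b ∈ S := aux_nsmul_mem hS hb n hn1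
    set k : ℤ := ⌈(x - (n:ℝ)*b) / p⌉ with hk
    have hxnb : 0 < x - (n:ℝ)*b := by linarith
    have hk1 : 1 ≤ k := by
      have : (0:ℝ) < (x - (n:ℝ)*b) / p := div_pos hxnb hp0
      exact Int.ceil_pos.mpr this
    have hkS : (k:ℝ) * p ∈ S := by
      have := aux_nsmul_mem hS hpS k.toNat (by omega)
      have e : ((k.toNat : ℕ) : ℝ) = (k : ℝ) := by
        exact_mod_cast congrArg (Int.cast : ℤ → ℝ) (Int.toNat_of_nonneg (by omega))
      rwa [e] at this
    refine ⟨(n:ℝ)*b + (k:ℝ)*p, Metric.mem_ball.mpr ?_, hS _ hnbS _ hkS⟩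
    have hle : (x - (n:ℝ)*b) / p ≤ (k:ℝ) := Int.le_ceil _
    have hlt : (k:ℝ) < (x - (n:ℝ)*b) / p + 1 := Int.ceil_lt_add_one _
    have h1 : x ≤ (n:ℝ)*b + (k:ℝ)*p := by
      have := (div_le_iff₀ hp0).mp hle
      linarith
    have hlt' : (k:ℝ)*p < (x - ↑n*b) + p := by
      have := mul_lt_mul_of_pos_right hlt hp0
      rwa [add_mul, div_mul_cancel₀ _ (ne_of_gt hp0), one_mul] at this
    have h2 : (n:ℝ)*b + (k:ℝ)*p < x + p := by linarith
    rw [Real.dist_eq, abs_lt]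
    constructor <;> linarith
  rw [← hcl.closure_eq]
  exact hdense.closure_eq

lemma aux_dense' {S : Set ℝ} (hS : ∀ x ∈ S, ∀ y ∈ S, x + y ∈ S) (hcl : IsClosed S)
    (hsmall : ∀ ε > (0:ℝ), ∃ q ∈ S, -ε < q ∧ q < 0) {a : ℝ} (ha : a ∈ S) (ha0 : 0 < a) :
    S = Set.univ := by
  have hT : ∀ x ∈ -S, ∀ y ∈ -S, x + y ∈ -S := by
    intro x hx y hy
    rw [Set.mem_neg] at *
    have := hS _ hx _ hy
    rwa [show -(x+y) = -x + -y by ring]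
  have hTcl : IsClosed (-S) := hcl.neg
  have hTuniv : -S = Set.univ := by
    refine aux_dense hT hTcl ?_ (b := -a) (by rwa [Set.mem_neg, neg_neg]) (by linarith)
    intro ε hε
    obtain ⟨q, hqS, hq1, hq2⟩ := hsmall ε hε
    exact ⟨-q, by rwa [Set.mem_neg, neg_neg], by linarith, by linarith⟩
  ext x
  simp only [Set.mem_univ, iff_true]
  have : -x ∈ -S := hTuniv ▸ Set.mem_univ _
  rwa [Set.mem_neg, neg_neg] at this

lemma aux_zsmul_mem {S : Set ℝ} (hS : ∀ x ∈ S, ∀ y ∈ S, x + y ∈ S)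
    {x : ℝ} (hx : x ∈ S) {k : ℤ} (hk : 1 ≤ k) : (k : ℝ) * x ∈ S := by
  have := aux_nsmul_mem hS hx k.toNat (by omega)
  have e : ((k.toNat : ℕ) : ℝ) = (k : ℝ) := by
    exact_mod_cast congrArg (Int.cast : ℤ → ℝ) (Int.toNat_of_nonneg (by omega))
  rwa [e] at this

lemma aux_classify {S : Set ℝ} (hS : ∀ x ∈ S, ∀ y ∈ S, x + y ∈ S) (hcl : IsClosed S)
    {a b : ℝ} (ha : a ∈ S) (hb : b ∈ S) (ha0 : 0 < a) (hb0 : b < 0) :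
    S = Set.univ ∨ ∃ α : ℝ, S = (AddSubgroup.zmultiples α : Set ℝ) := by
  set P := S ∩ Set.Ioi 0 with hP
  set N := S ∩ Set.Iio 0 with hN
  have hPne : P.Nonempty := ⟨a, ha, ha0⟩
  have hNne : N.Nonempty := ⟨b, hb, hb0⟩
  have hPbd : BddBelow P := ⟨0, fun x hx => le_of_lt hx.2⟩
  have hNbd : BddAbove N := ⟨0, fun x hx => le_of_lt hx.2⟩
  set α := sInf P with hαdef
  set β := sSup N with hβdef
  have hα0 : 0 ≤ α := le_csInf hPne fun x hx => le_of_lt hx.2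
  have hβ0 : β ≤ 0 := csSup_le hNne fun x hx => le_of_lt hx.2
  rcases eq_or_lt_of_le hα0 with hαz | hαpos
  · left
    refine aux_dense hS hcl ?_ hb hb0
    intro ε hε
    obtain ⟨p, hpP, hpε⟩ := exists_lt_of_csInf_lt hPne (show sInf P < ε by rw [← hαdef, ← hαz]; exact hε)
    exact ⟨p, hpP.1, hpP.2, hpε⟩
  rcases eq_or_lt_of_le hβ0 with hβz | hβneg
  · left
    refine aux_dense' hS hcl ?_ ha ha0
    intro ε hε
    obtain ⟨q, hqN, hqε⟩ := exists_lt_of_lt_csSup hNne (show -ε < sSup N by rw [← hβdef, hβz]; linarith)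
    exact ⟨q, hqN.1, hqε, hqN.2⟩
  · -- α > 0, β < 0
    have hαS : α ∈ S := by
      have h1 : α ∈ closure P := csInf_mem_closure hPne hPbd
      have h2 : closure P ⊆ closure S := closure_mono Set.inter_subset_left
      rw [hcl.closure_eq] at h2
      exact h2 h1
    have hβS : β ∈ S := by
      have h1 : β ∈ closure N := csSup_mem_closure hNne hNbd
      have h2 : closure N ⊆ closure S := closure_mono Set.inter_subset_left
      rw [hcl.closure_eq] at h2
      exact h2 h1
    have hmin : ∀ x ∈ S, 0 < x → α ≤ x := fun x hx h0 => csInf_le hPbd ⟨hx, h0⟩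
    have hmax : ∀ x ∈ S, x < 0 → x ≤ β := fun x hx h0 => le_csSup hNbd ⟨hx, h0⟩
    have hsum : α + β ∈ S := hS _ hαS _ hβS
    have habz : α + β = 0 := by
      rcases lt_trichotomy (α + β) 0 with h | h | h
      · have := hmax _ hsum h; linarith
      · exact h
      · have := hmin _ hsum h; linarith
    have hnegα : -α ∈ S := by rw [show -α = β by linarith]; exact hβS
    have h0S : (0:ℝ) ∈ S := by rw [← habz]; exact hsum
    right
    refine ⟨α, ?_⟩
    ext x
    simp only [SetLike.mem_coe, AddSubgroup.mem_zmultiples_iff]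
    constructor
    · intro hx
      set k : ℤ := ⌊x / α⌋ with hk
      have hkle : (k:ℝ) ≤ x / α := Int.floor_le _
      have hklt : x / α < (k:ℝ) + 1 := Int.lt_floor_add_one _
      have hr0 : 0 ≤ x - (k:ℝ) * α := by
        have := mul_le_mul_of_nonneg_right hkle (le_of_lt hαpos)
        rw [div_mul_cancel₀ _ (ne_of_gt hαpos)] at this
        linarith
      have hrα : x - (k:ℝ) * α < α := by
        have := mul_lt_mul_of_pos_right hklt hαpos
        rw [div_mul_cancel₀ _ (ne_of_gt hαpos), add_mul, one_mul] at this
        linarith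
      have hrS : x - (k:ℝ) * α = 0 ∨ x - (k:ℝ) * α ∈ S := by
        rcases lt_trichotomy k 0 with hkneg | hkz | hkpos
        · right
          have : ((-k : ℤ):ℝ) * α ∈ S := aux_zsmul_mem hS hαS (by omega)
          have e : x - (k:ℝ) * α = x + ((-k:ℤ):ℝ) * α := by push_cast; ring
          rw [e]; exact hS _ hx _ this
        · right; rw [hkz]; simpa using hx
        · right
          have : ((k : ℤ):ℝ) * (-α) ∈ S := aux_zsmul_mem hS hnegα (by omega)
          have e : x - (k:ℝ) * α = x + ((k:ℤ):ℝ) * (-α) := by ring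
          rw [e]; exact hS _ hx _ this
      have hrz : x - (k:ℝ) * α = 0 := by
        rcases hrS with h | h
        · exact h
        · rcases eq_or_lt_of_le hr0 with h0 | h0
          · linarith
          · have := hmin _ h h0; linarith
      exact ⟨k, by rw [zsmul_eq_mul]; linarith⟩
    · rintro ⟨k, rfl⟩
      rw [zsmul_eq_mul]
      rcases lt_trichotomy k 0 with hkneg | hkz | hkpos
      · have : ((-k : ℤ):ℝ) * (-α) ∈ S := aux_zsmul_mem hS hnegα (by omega)
        have e : (k:ℝ) * α = ((-k:ℤ):ℝ) * (-α) := by push_cast; ring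
        rw [e]; exact this
      · rw [hkz]; simpa using h0S
      · exact aux_zsmul_mem hS hαS (by omega)


lemma aux_gamma_add (m : Measure ℝ) :
    ∀ x ∈ GammaM m, ∀ y ∈ GammaM m, x + y ∈ GammaM m := by
  intro x hx y hy
  exact map_mem_closure₂ continuous_add hx hy
    (fun a ha b hb => AddSubsemigroup.add_mem _ ha hb)

lemma aux_main (m : Measure ℝ) [IsProbabilityMeasure m]
    (hint : Integrable (fun t : ℝ => t) m) (hmean : ∫ t, t ∂m = 0) :
    (∃ H : AddSubgroup ℝ, (H : Set ℝ) = GammaM m) ∧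
      (Dense (GammaM m) ∨ ∃ α : ℝ, GammaM m = (AddSubgroup.zmultiples α : Set ℝ)) := by
  have hcl : IsClosed (GammaM m) := isClosed_closure
  have hadd := aux_gamma_add m
  rcases aux_supp_dichotomy m hint hmean with h0 | ⟨⟨a, haS, ha0⟩, ⟨b, hbS, hb0⟩⟩
  · -- support is {0}
    have hΓ : GammaM m = {0} := by
      have hsub : (AddSubsemigroup.closure (measSupport m) : Set ℝ) = {0} := by
        apply le_antisymm
        · have : AddSubsemigroup.closure (measSupport m) ≤
              ⟨{(0:ℝ)}, by rintro a b rfl rfl; simp⟩ := by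
            rw [AddSubsemigroup.closure_le]
            rw [h0]
            exact le_refl _
          exact this
        · rw [← h0]; exact AddSubsemigroup.subset_closure
      rw [GammaM, hsub, closure_singleton]
    have hz : GammaM m = (AddSubgroup.zmultiples (0:ℝ) : Set ℝ) := by
      rw [hΓ]
      ext x
      simp [AddSubgroup.mem_zmultiples_iff, eq_comm]
    exact ⟨⟨AddSubgroup.zmultiples 0, hz.symm⟩, Or.inr ⟨0, hz⟩⟩
  · have haΓ : a ∈ GammaM m := subset_closure (AddSubsemigroup.subset_closure haS)
    have hbΓ : b ∈ GammaM m := subset_closure (AddSubsemigroup.subset_closure hbS)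
    rcases aux_classify hadd hcl haΓ hbΓ ha0 hb0 with huniv | ⟨α, hα⟩
    · refine ⟨⟨⊤, by rw [huniv]; rfl⟩, Or.inl ?_⟩
      rw [huniv]; exact dense_univ
    · exact ⟨⟨AddSubgroup.zmultiples α, hα.symm⟩, Or.inr ⟨α, hα⟩⟩

/-- Let `m` be a centered Borel probability measure on `ℝ` and `Γ_m ⊆ ℝ` the closed
sub-semigroup generated by the support of `m`.  If `Γ_m` is discrete then it is a subgroup
of `ℝ`; if it is not discrete then it is dense in `ℝ`. -/
theorem stmt1 (m : Measure ℝ) [IsProbabilityMeasure m]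
    (hint : Integrable (fun t : ℝ => t) m) (hmean : ∫ t, t ∂m = 0) :
    (DiscreteTopology (GammaM m) → ∃ H : AddSubgroup ℝ, (H : Set ℝ) = GammaM m) ∧
    (¬ DiscreteTopology (GammaM m) → Dense (GammaM m)) := by
  obtain ⟨hgrp, hdich⟩ := aux_main m hint hmean
  refine ⟨fun _ => hgrp, fun hnd => ?_⟩
  rcases hdich with hd | ⟨α, hα⟩
  · exact hd
  · exact absurd (hα ▸ (inferInstance : DiscreteTopology (AddSubgroup.zmultiples α))) hnd
end

section
/- With the notation of the fiber-equidistribution theorem: given ε > 0 and a measurable N ⊆ W with m(N) < ε²/2, there exist a measurable K ⊆ W with m(W ∖ K) < ε and a rank n₀ such that for all c ∈ K and n ≥ n₀, the conditional expectation E_{m|W}[1_N | Q_{W,n}](c) < ε. -/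
open MeasureTheory

/-!
The conditional expectations `f n = E[1_N | Q_{W,n}]` form a reverse martingale, and for such
a sequence Doob's maximal inequality holds with the same constant as for forward martingales:
splitting `⋃ n, {ε ≤ f n}` according to the first index at which `f n ≥ ε`, each piece lies in
the σ-algebra of its own index, so `ε m(⋃ n, {ε ≤ f n}) ≤ m(N) < ε²/2`. Taking `K` to be the
complement in `W` of that union works already with `n₀ = 0`.
-/

section MaximalInequality

variable {Ω ι : Type*} {m0 : MeasurableSpace Ω} {μ : Measure Ω} {g : Ω → ℝ}

theorem measurableSet_le_condExp (m : MeasurableSpace Ω) (ε : ℝ) :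
    MeasurableSet[m] {x | ε ≤ μ[g|m] x} :=
  measurableSet_le measurable_const stronglyMeasurable_condExp.measurable

variable [IsFiniteMeasure μ] {𝔪 : ι → MeasurableSpace Ω}

theorem mul_measureReal_biUnion_le_setIntegral [LinearOrder ι] (h𝔪 : Antitone 𝔪)
    (hle : ∀ i, 𝔪 i ≤ m0) (hg : Integrable g μ) (ε : ℝ) (s : Finset ι) :
    ε * μ.real (⋃ i ∈ s, {x | ε ≤ μ[g|𝔪 i] x}) ≤
      ∫ x in ⋃ i ∈ s, {x | ε ≤ μ[g|𝔪 i] x}, g x ∂μ := by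
  induction s using Finset.induction_on_min with
  | empty => simp
  | insert a s has ih =>
    set U := ⋃ i ∈ s, {x | ε ≤ μ[g|𝔪 i] x}
    -- `U` only involves indices above `a`, so the part of `{ε ≤ f a}` outside it is `𝔪 a`-measurable
    have hU : MeasurableSet[𝔪 a] U := Finset.measurableSet_biUnion s fun i hi =>
      h𝔪 (has i hi).le _ (measurableSet_le_condExp (𝔪 i) ε)
    have hA : MeasurableSet[𝔪 a] ({x | ε ≤ μ[g|𝔪 a] x} \ U) :=
      (measurableSet_le_condExp (𝔪 a) ε).diff hU
    have hdisj : Disjoint ({x | ε ≤ μ[g|𝔪 a] x} \ U) U := Set.disjoint_sdiff_left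
    have hfirst : ε * μ.real ({x | ε ≤ μ[g|𝔪 a] x} \ U) ≤
        ∫ x in {x | ε ≤ μ[g|𝔪 a] x} \ U, g x ∂μ := by
      rw [← setIntegral_condExp (hle a) hg hA]
      exact setIntegral_ge_of_const_le_real (hle a _ hA) (measure_ne_top μ _)
        (fun x hx => hx.1) integrable_condExp.integrableOn
    rw [Finset.set_biUnion_insert, ← Set.sdiff_union_self,
      measureReal_union hdisj (hle a _ hU) (measure_ne_top μ _) (measure_ne_top μ _),
      setIntegral_union hdisj (hle a _ hU) hg.integrableOn hg.integrableOn, mul_add]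
    exact add_le_add hfirst ih

/-- Doob's maximal inequality for the reverse martingale `n ↦ μ[g | 𝔪 n]`. -/
theorem ofReal_mul_measure_iUnion_le_integral [LinearOrder ι] [Countable ι] (h𝔪 : Antitone 𝔪)
    (hle : ∀ i, 𝔪 i ≤ m0) (hg : Integrable g μ) (hg0 : 0 ≤ᵐ[μ] g) (ε : ℝ) :
    ENNReal.ofReal ε * μ (⋃ i, {x | ε ≤ μ[g|𝔪 i] x}) ≤ ENNReal.ofReal (∫ x, g x ∂μ) := by
  rcases le_or_gt ε 0 with hε | hε
  · simp [ENNReal.ofReal_of_nonpos hε]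
  have hdir : Directed (· ⊆ ·) fun s : Finset ι => ⋃ i ∈ s, {x | ε ≤ μ[g|𝔪 i] x} :=
    Monotone.directed_le fun s t hst => Set.biUnion_subset_biUnion_left hst
  rw [Set.iUnion_eq_iUnion_finset, hdir.measure_iUnion, ENNReal.mul_iSup]
  refine iSup_le fun s => ?_
  rw [← ofReal_measureReal (measure_ne_top μ _), ← ENNReal.ofReal_mul hε.le]
  exact ENNReal.ofReal_le_ofReal <| (mul_measureReal_biUnion_le_setIntegral h𝔪 hle hg ε s).trans
    (setIntegral_le_integral hg hg0)

end MaximalInequality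

theorem MeasurableSpace.comap_iterate_antitone {E : Type*} [inst : MeasurableSpace E] {T : E → E}
    (hT : Measurable T) : Antitone fun n : ℕ => MeasurableSpace.comap (T^[n]) inst := by
  intro a b hab
  obtain ⟨k, rfl⟩ := Nat.exists_eq_add_of_le hab
  simp only [add_comm a k, Function.iterate_add, ← MeasurableSpace.comap_comp]
  exact MeasurableSpace.comap_mono (hT.iterate k).comap_le

theorem stmt12_general {E : Type*} [inst : MeasurableSpace E] (m : Measure E)
    (T : E → E) (hT : MeasurePreserving T m m)
    (W : Set E) (hW : MeasurableSet W) (hWfin : m W ≠ ⊤)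
    (ε : ℝ) (hε : 0 < ε)
    (N : Set E) (hN : MeasurableSet N)
    (hNsmall : m N < ENNReal.ofReal (ε ^ 2 / 2)) :
    ∃ K : Set E, MeasurableSet K ∧ K ⊆ W ∧ m (W \ K) < ENNReal.ofReal ε ∧
      ∃ n₀ : ℕ, ∀ c ∈ K, ∀ n ≥ n₀,
        ((m.restrict W)[Set.indicator N (fun _ => (1 : ℝ)) |
            MeasurableSpace.comap (T^[n]) inst]) c < ε := by
  have : IsFiniteMeasure (m.restrict W) := isFiniteMeasure_restrict.mpr hWfin
  have hle : ∀ n, MeasurableSpace.comap (T^[n]) inst ≤ inst :=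
    fun n => (hT.measurable.iterate n).comap_le
  set B := ⋃ n, {x | ε ≤ (m.restrict W)[Set.indicator N (fun _ => (1 : ℝ)) |
    MeasurableSpace.comap (T^[n]) inst] x}
  have hB : MeasurableSet B := .iUnion fun n => hle n _ (measurableSet_le_condExp _ ε)
  have hmaximal : ENNReal.ofReal ε * m.restrict W B < ENNReal.ofReal ε * ENNReal.ofReal (ε / 2) :=
    calc ENNReal.ofReal ε * m.restrict W B
      _ ≤ ENNReal.ofReal (∫ x, Set.indicator N (fun _ => (1 : ℝ)) x ∂m.restrict W) :=
        ofReal_mul_measure_iUnion_le_integral (MeasurableSpace.comap_iterate_antitone hT.measurable)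
          hle ((integrable_const 1).indicator hN) (.of_forall (Set.indicator_nonneg (by simp))) ε
      _ = m.restrict W N := by
        rw [← ofReal_measureReal (measure_ne_top _ _)]; exact congrArg _ (integral_indicator_one hN)
      _ ≤ m N := Measure.restrict_apply_le W N
      _ < ENNReal.ofReal (ε ^ 2 / 2) := hNsmall
      _ = ENNReal.ofReal ε * ENNReal.ofReal (ε / 2) := by
        rw [← ENNReal.ofReal_mul hε.le]; ring_nf
  refine ⟨W \ B, hW.diff hB, Set.sdiff_subset, ?_, 0, fun c hc n _ => ?_⟩
  · rw [Set.sdiff_sdiff_right_self, Set.inter_comm, ← Measure.restrict_apply hB]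
    refine ((ENNReal.mul_lt_mul_iff_right (by simpa using hε) ENNReal.ofReal_ne_top).mp
      hmaximal).trans ?_
    exact ENNReal.ofReal_lt_ofReal_iff hε |>.mpr (by linarith)
  · exact not_le.mp fun h => hc.2 (Set.mem_iUnion.mpr ⟨n, h⟩)

/-- **Non-accumulation of fiber pieces in small sets.**  With the notation of the
fiber-equidistribution theorem: `(E, ℰ, m)` σ-finite, `T` measure-preserving, `W` of
finite positive measure, `Q_{W,n}` the trace of `T^{−n}(ℰ)` on `W`.  Given `ε > 0` and a
measurable `N ⊆ W` with `m(N) < ε²/2`, there exist a measurable `K ⊆ W` with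
`m(W ∖ K) < ε` and a rank `n₀` such that for all `c ∈ K` and `n ≥ n₀`, the conditional
expectation satisfies `E_{m|W}[1_N | Q_{W,n}](c) < ε`. -/
theorem stmt12 {E : Type*} [inst : MeasurableSpace E] (m : Measure E) [SigmaFinite m]
    (T : E → E) (hT : MeasurePreserving T m m)
    (W : Set E) (hW : MeasurableSet W) (hW0 : m W ≠ 0) (hWfin : m W ≠ ⊤)
    (ε : ℝ) (hε : 0 < ε)
    (N : Set E) (hN : MeasurableSet N) (hNW : N ⊆ W)
    (hNsmall : m N < ENNReal.ofReal (ε ^ 2 / 2)) :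
    ∃ K : Set E, MeasurableSet K ∧ K ⊆ W ∧ m (W \ K) < ENNReal.ofReal ε ∧
      ∃ n₀ : ℕ, ∀ c ∈ K, ∀ n ≥ n₀,
        ((m.restrict W)[Set.indicator N (fun _ => (1 : ℝ)) |
            MeasurableSpace.comap (T^[n]) inst]) c < ε :=
  stmt12_general (inst := inst) m T hT W hW hWfin ε hε N hN hNsmall
end

section
/- Let Γ ⊆ SL_d(ℤ) be strongly irreducible with finite orbit Γx ⊆ 𝕋^d of a rational point x, and χ : Γ → ℝ a semigroup morphism with dense image. Then the Radon measure ν' = Σ_{y ∈ Γx} δ_y ⊗ Leb on 𝕋^d × ℝ is Γ-invariant (for g·(y,t) = (gy, t + χ(g))) and ergodic: every measurable A ⊆ 𝕋^d × ℝ with g·A = A for all g ∈ Γ satisfies ν'(A) = 0 or ν'((𝕋^d × ℝ) ∖ A) = 0. -/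
open MeasureTheory Metric
open scoped ENNReal

noncomputable section

/-- The `d`-dimensional torus `𝕋^d`. -/
abbrev Torus (d : ℕ) : Type := Fin d → AddCircle (1 : ℝ)

/-- The endomorphism of `𝕋^d` induced by `g ∈ SL_d(ℤ)`. -/
def torusSL {d : ℕ} (g : Matrix.SpecialLinearGroup (Fin d) ℤ) (x : Torus d) : Torus d :=
  fun i => ∑ j, (g : Matrix (Fin d) (Fin d) ℤ) i j • x j

/-- The action of `g` on `𝕋^d × ℝ`: `g · (x, t) = (gx, t + χ(g))`. -/
def act {d : ℕ} (χ : Matrix.SpecialLinearGroup (Fin d) ℤ → ℝ)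
    (g : Matrix.SpecialLinearGroup (Fin d) ℤ) (p : Torus d × ℝ) : Torus d × ℝ :=
  (torusSL g p.1, p.2 + χ g)

/-- The linear action of `g ∈ SL_d(ℤ)` on `ℝ^d`. -/
def slAction {d : ℕ} (g : Matrix.SpecialLinearGroup (Fin d) ℤ) :
    (Fin d → ℝ) →ₗ[ℝ] (Fin d → ℝ) :=
  (((g : Matrix (Fin d) (Fin d) ℤ)).map (Int.cast : ℤ → ℝ)).mulVecLin

/-- Strong irreducibility of a subset of `SL_d(ℤ)` acting on `ℝ^d`. -/
def StronglyIrreducible {d : ℕ} (S : Set (Matrix.SpecialLinearGroup (Fin d) ℤ)) : Prop :=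
  ¬ ∃ F : Finset (Submodule ℝ (Fin d → ℝ)), F.Nonempty ∧
      (∀ V ∈ F, V ≠ ⊥ ∧ V ≠ ⊤) ∧
      (∀ g ∈ S, ∀ V ∈ F, ∃ V' ∈ F, Submodule.map (slAction g) V ≤ V')

lemma torusSL_mul {d : ℕ} (g h : Matrix.SpecialLinearGroup (Fin d) ℤ) (x : Torus d) :
    torusSL (g * h) x = torusSL g (torusSL h x) := by
  funext i
  show ∑ k, ((g * h : Matrix.SpecialLinearGroup (Fin d) ℤ) : Matrix (Fin d) (Fin d) ℤ) i k • x k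
      = ∑ j, (g : Matrix (Fin d) (Fin d) ℤ) i j • ∑ k, (h : Matrix (Fin d) (Fin d) ℤ) j k • x k
  have : ∀ j, (g : Matrix (Fin d) (Fin d) ℤ) i j • ∑ k, (h : Matrix (Fin d) (Fin d) ℤ) j k • x k
      = ∑ k, ((g : Matrix (Fin d) (Fin d) ℤ) i j * (h : Matrix (Fin d) (Fin d) ℤ) j k) • x k := by
    intro j
    rw [Finset.smul_sum]
    exact Finset.sum_congr rfl fun k _ => (smul_smul _ _ _)
  simp only [this]
  rw [Finset.sum_comm]
  refine Finset.sum_congr rfl fun k _ => ?_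
  rw [Matrix.SpecialLinearGroup.coe_mul, Matrix.mul_apply, Finset.sum_smul]

lemma torusSL_one {d : ℕ} (x : Torus d) : torusSL (1 : Matrix.SpecialLinearGroup (Fin d) ℤ) x = x := by
  funext i
  show ∑ j, ((1 : Matrix.SpecialLinearGroup (Fin d) ℤ) : Matrix (Fin d) (Fin d) ℤ) i j • x j = x i
  simp [Matrix.one_apply, ite_smul]

lemma torusSL_injective {d : ℕ} (g : Matrix.SpecialLinearGroup (Fin d) ℤ) :
    Function.Injective (torusSL g) := by
  have hli : Function.LeftInverse (torusSL g⁻¹) (torusSL g) := by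
    intro y
    rw [← torusSL_mul, inv_mul_cancel, torusSL_one]
  exact hli.injective

lemma torusSL_continuous {d : ℕ} (g : Matrix.SpecialLinearGroup (Fin d) ℤ) :
    Continuous (torusSL g) := by
  refine continuous_pi fun i => continuous_finset_sum _ fun j _ => ?_
  exact (continuous_apply j).zsmul _

/-- Zero-one law: a measurable subset of `ℝ` invariant under a dense set of translations
is Lebesgue-null or Lebesgue-conull. -/
lemma zeroOneLaw (E : Set ℝ) (hE : MeasurableSet E) (D : Set ℝ) (hD : Dense D)
    (hinv : ∀ t ∈ D, ∀ s : ℝ, s ∈ E ↔ s - t ∈ E) :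
    volume E = 0 ∨ volume Eᶜ = 0 := by
  by_contra hcon
  push_neg at hcon
  obtain ⟨hE0, hEc0⟩ := hcon
  have hres : (volume.restrict E) ≠ 0 := by
    intro h
    apply hE0
    rw [← Measure.restrict_apply_univ, h]; simp
  have hresC : (volume.restrict Eᶜ) ≠ 0 := by
    intro h
    apply hEc0
    rw [← Measure.restrict_apply_univ, h]; simp
  have hAE := Besicovitch.ae_tendsto_measure_inter_div (volume : Measure ℝ) E
  have hAEc := Besicovitch.ae_tendsto_measure_inter_div (volume : Measure ℝ) Eᶜ
  haveI : (ae (volume.restrict E)).NeBot := ae_neBot.2 hres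
  haveI : (ae (volume.restrict Eᶜ)).NeBot := ae_neBot.2 hresC
  obtain ⟨a, ha⟩ := hAE.exists
  obtain ⟨b, hb⟩ := hAEc.exists
  have h78 : (ENNReal.ofReal (7/8)) < 1 := by rw [ENNReal.ofReal_lt_one]; norm_num
  have ha' := ha.eventually (lt_mem_nhds h78)
  have hb' := hb.eventually (lt_mem_nhds h78)
  obtain ⟨ε, hε, hev⟩ := ((nhdsGT_basis (0:ℝ)).eventually_iff).mp (ha'.and hb')
  set r : ℝ := ε / 2 with hrdef
  have hr : 0 < r := by positivity
  have hrmem : r ∈ Set.Ioo (0:ℝ) ε := ⟨hr, by simp [hrdef]; linarith⟩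
  have hr78mem : 7 * r / 8 ∈ Set.Ioo (0:ℝ) ε := ⟨by positivity, by simp [hrdef]; linarith⟩
  obtain ⟨t, htD, htd⟩ := hD.exists_dist_lt (b - a) (show (0:ℝ) < r/8 by positivity)
  rw [Real.dist_eq] at htd
  -- translation invariance of measures of slices of E
  have htrans : ∀ ρ : ℝ, volume (E ∩ closedBall (a + t) ρ) = volume (E ∩ closedBall a ρ) := by
    intro ρ
    have hset : E ∩ closedBall (a + t) ρ = (fun s => s + (-t)) ⁻¹' (E ∩ closedBall a ρ) := by
      ext s
      simp only [Set.mem_inter_iff, Set.mem_preimage, mem_closedBall, Real.dist_eq]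
      constructor
      · rintro ⟨hsE, hsd⟩
        refine ⟨by rw [← sub_eq_add_neg]; exact (hinv t htD s).mp hsE, ?_⟩
        have : s + -t - a = s - (a + t) := by ring
        rw [this]; exact hsd
      · rintro ⟨hsE, hsd⟩
        refine ⟨(hinv t htD s).mpr (by rw [sub_eq_add_neg]; exact hsE), ?_⟩
        have : s - (a + t) = s + -t - a := by ring
        rw [this]; exact hsd
    rw [hset, measure_preimage_add_right]
  -- inclusion of balls
  have hsub : closedBall (a + t) (7 * r / 8) ⊆ closedBall b r := by
    apply closedBall_subset_closedBall'
    have : dist (a + t) b = |b - a - t| := by rw [Real.dist_eq]; rw [abs_sub_comm]; ring_nf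
    rw [this]
    linarith
  -- density bounds
  obtain ⟨ha2, _⟩ := hev hr78mem
  obtain ⟨_, hb2⟩ := hev hrmem
  have hball_ne : ∀ c : ℝ, ∀ ρ : ℝ, 0 < ρ → volume (closedBall c ρ) ≠ 0 := by
    intro c ρ hρ
    rw [Real.volume_closedBall]
    simp [ENNReal.ofReal_eq_zero]; linarith
  have hball_fin : ∀ c : ℝ, ∀ ρ : ℝ, volume (closedBall c ρ) ≠ ⊤ := by
    intro c ρ; rw [Real.volume_closedBall]; exact ENNReal.ofReal_ne_top
  have hA : ENNReal.ofReal (7/8) * volume (closedBall a (7*r/8)) < volume (E ∩ closedBall a (7*r/8)) := by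
    exact (ENNReal.lt_div_iff_mul_lt (Or.inl (hball_ne a (7*r/8) (by positivity))) (Or.inl (hball_fin a (7*r/8)))).mp ha2
  have hB : ENNReal.ofReal (7/8) * volume (closedBall b r) < volume (Eᶜ ∩ closedBall b r) := by
    exact (ENNReal.lt_div_iff_mul_lt (Or.inl (hball_ne b r hr)) (Or.inl (hball_fin b r))).mp hb2
  have hEb : volume (E ∩ closedBall a (7*r/8)) ≤ volume (E ∩ closedBall b r) := by
    rw [← htrans]
    exact measure_mono (Set.inter_subset_inter_right _ hsub)
  have hsum : volume (closedBall b r) = volume (E ∩ closedBall b r) + volume (Eᶜ ∩ closedBall b r) := by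
    have := measure_inter_add_diff (μ := (volume : Measure ℝ)) (closedBall b r) hE
    rw [Set.inter_comm, Set.diff_eq, Set.inter_comm _ Eᶜ] at this
    exact this.symm
  have hlt : ENNReal.ofReal (7/8) * volume (closedBall a (7*r/8)) + ENNReal.ofReal (7/8) * volume (closedBall b r)
      < volume (closedBall b r) := by
    have h' := ENNReal.add_lt_add (lt_of_lt_of_le hA hEb) hB
    rwa [← hsum] at h'
  rw [Real.volume_closedBall, Real.volume_closedBall, ← ENNReal.ofReal_mul (by norm_num),
    ← ENNReal.ofReal_mul (by norm_num), ← ENNReal.ofReal_add (by positivity) (by positivity)] at hlt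
  rw [ENNReal.ofReal_lt_ofReal_iff (by positivity)] at hlt
  linarith

/-- Let `Γ ⊆ SL_d(ℤ)` be a strongly irreducible sub-semigroup with finite orbit
`Γx ⊆ 𝕋^d` of a rational point `x`, and `χ : Γ → ℝ` a semigroup morphism with dense
image.  Then the Radon measure `ν' = Σ_{y ∈ Γx} δ_y ⊗ Leb` on `𝕋^d × ℝ` is `Γ`-invariant
(for `g·(y,t) = (gy, t + χ(g))`) and ergodic: every measurable `A ⊆ 𝕋^d × ℝ` with
`g·A = A` for all `g ∈ Γ` satisfies `ν'(A) = 0` or `ν'((𝕋^d × ℝ) ∖ A) = 0`. -/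
theorem stmt19 {d : ℕ} (Γ : Subsemigroup (Matrix.SpecialLinearGroup (Fin d) ℤ))
    (hirr : StronglyIrreducible (Γ : Set (Matrix.SpecialLinearGroup (Fin d) ℤ)))
    (χ : Matrix.SpecialLinearGroup (Fin d) ℤ → ℝ)
    (hχ : ∀ g ∈ Γ, ∀ h ∈ Γ, χ (g * h) = χ g + χ h)
    (hdense : Dense (χ '' (Γ : Set (Matrix.SpecialLinearGroup (Fin d) ℤ))))
    (x : Torus d) (q : Fin d → ℚ) (hx : x = fun i => (((q i : ℝ)) : AddCircle (1 : ℝ)))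
    (hfin : Set.Finite ((fun g => torusSL g x) '' (Γ : Set _)))
    (ν' : Measure (Torus d × ℝ))
    (hν' : ν' = ∑ y ∈ hfin.toFinset, (Measure.dirac y).prod (volume : Measure ℝ)) :
    (∀ g ∈ Γ, Measure.map (act χ g) ν' = ν') ∧
    (∀ A : Set (Torus d × ℝ), MeasurableSet A →
      (∀ g ∈ Γ, act χ g '' A = A) →
      ν' A = 0 ∨ ν' ((Set.univ : Set (Torus d × ℝ)) \ A) = 0) := by
  classical
  have hmem : ∀ y : Torus d, y ∈ hfin.toFinset ↔ ∃ g ∈ Γ, torusSL g x = y := by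
    intro y
    rw [Set.Finite.mem_toFinset]
    constructor
    · rintro ⟨g, hg, rfl⟩; exact ⟨g, hg, rfl⟩
    · rintro ⟨g, hg, rfl⟩; exact ⟨g, hg, rfl⟩
  have hGO : ∀ g ∈ Γ, ∀ y ∈ hfin.toFinset, torusSL g y ∈ hfin.toFinset := by
    intro g hg y hy
    rw [hmem] at hy ⊢
    obtain ⟨h, hh, rfl⟩ := hy
    exact ⟨g * h, mul_mem hg hh, torusSL_mul g h x⟩
  have hpow_mem : ∀ g ∈ Γ, ∀ n : ℕ, 1 ≤ n → g ^ n ∈ Γ := by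
    intro g hg n hn
    induction n, hn using Nat.le_induction with
    | base => simpa using hg
    | succ n hn ih => rw [pow_succ]; exact mul_mem ih hg
  have hχpow : ∀ g ∈ Γ, ∀ n : ℕ, 1 ≤ n → χ (g ^ n) = n * χ g := by
    intro g hg n hn
    induction n, hn using Nat.le_induction with
    | base => simp
    | succ n hn ih =>
      rw [pow_succ, hχ _ (hpow_mem g hg n hn) _ hg, ih]
      push_cast; ring
  -- a uniform power fixing all points of the orbit
  have key : ∃ M : ℕ, 1 ≤ M ∧ (∀ g ∈ Γ, ∀ y ∈ hfin.toFinset, torusSL (g ^ M) y = y) := by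
    haveI inst : Fintype ↥((fun g => torusSL g x) '' (Γ : Set (Matrix.SpecialLinearGroup (Fin d) ℤ))) :=
      hfin.fintype
    set O := (fun g => torusSL g x) '' (Γ : Set (Matrix.SpecialLinearGroup (Fin d) ℤ)) with hOdef
    refine ⟨Fintype.card (Equiv.Perm ↥O), Fintype.card_pos, ?_⟩
    intro g hg
    have hGO' : ∀ z : Torus d, z ∈ O → torusSL g z ∈ O := by
      rintro z ⟨h, hh, rfl⟩
      exact ⟨g * h, mul_mem hg hh, torusSL_mul g h x⟩
    let f : O → O := fun z => ⟨torusSL g z.1, hGO' z.1 z.2⟩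
    have hfinj : Function.Injective f := by
      intro a b hab
      exact Subtype.ext (torusSL_injective g (congrArg Subtype.val hab))
    let σ : Equiv.Perm O := Equiv.ofBijective f (Finite.injective_iff_bijective.mp hfinj)
    have hiter : ∀ n : ℕ, ∀ z : O, ((σ ^ n) z : Torus d) = torusSL (g ^ n) z.1 := by
      intro n
      induction n with
      | zero => intro z; simp [torusSL_one]
      | succ n ih =>
        intro z
        have h1 : (σ ^ (n + 1)) z = (σ ^ n) (σ z) := by rw [pow_succ]; rfl
        rw [h1, ih (σ z)]
        have h2 : ((σ z : O) : Torus d) = torusSL g z.1 := rfl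
        rw [h2, ← torusSL_mul, ← pow_succ]
    intro y hy
    have hyO : y ∈ O := (Set.Finite.mem_toFinset hfin).mp hy
    have hσM : σ ^ Fintype.card (Equiv.Perm O) = 1 := pow_card_eq_one
    have hfinal := hiter (Fintype.card (Equiv.Perm O)) ⟨y, hyO⟩
    rw [hσM] at hfinal
    simpa using hfinal.symm
  obtain ⟨M, hM1, hfix⟩ := key
  have hM0 : (0 : ℝ) < M := by exact_mod_cast hM1
  -- dense stabilizer translations
  have hDdense : ∀ y ∈ hfin.toFinset,
      Dense {r : ℝ | ∃ g ∈ Γ, torusSL g y = y ∧ χ g = r} := by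
    intro y hy
    rw [Metric.dense_iff]
    intro c ε hε
    obtain ⟨w, hw, hdist⟩ := hdense.exists_dist_lt (c / M) (show (0:ℝ) < ε / M by positivity)
    obtain ⟨g, hgΓ, rfl⟩ := hw
    refine ⟨M * χ g, ?_, g ^ M, hpow_mem g hgΓ M hM1, hfix g hgΓ y hy, hχpow g hgΓ M hM1⟩
    rw [Metric.mem_ball, Real.dist_eq]
    rw [Real.dist_eq] at hdist
    have h1 : (M : ℝ) * χ g - c = (M : ℝ) * (χ g - c / M) := by field_simp [mul_comm]
    rw [h1, abs_mul, abs_of_pos hM0]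
    have h2 : |χ g - c / M| < ε / M := by rwa [abs_sub_comm]
    calc (M : ℝ) * |χ g - c / M| < M * (ε / M) := mul_lt_mul_of_pos_left h2 hM0
    _ = ε := by field_simp [mul_comm]
  -- transitivity on the orbit
  have htransO : ∀ y ∈ hfin.toFinset, ∀ z ∈ hfin.toFinset, ∃ γ ∈ Γ, torusSL γ y = z := by
    intro y hy z hz
    rw [hmem] at hy hz
    obtain ⟨g, hg, rfl⟩ := hy
    obtain ⟨h, hh, rfl⟩ := hz
    have hgx : torusSL g x ∈ hfin.toFinset := (hmem _).mpr ⟨g, hg, rfl⟩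
    have hfix2 : torusSL (g ^ (2 * M)) (torusSL g x) = torusSL g x := by
      have h1 : 2 * M = M + M := by ring
      rw [h1, pow_add, torusSL_mul, hfix g hg _ hgx, hfix g hg _ hgx]
    have h2M : torusSL (g ^ (2 * M)) x = x := by
      apply torusSL_injective g
      have hcomm : torusSL g (torusSL (g ^ (2 * M)) x) = torusSL (g ^ (2 * M)) (torusSL g x) := by
        rw [← torusSL_mul, ← torusSL_mul, ← pow_succ, ← pow_succ']
      rw [hcomm, hfix2]
    refine ⟨h * g ^ (2 * M - 1), mul_mem hh (hpow_mem g hg _ (by omega)), ?_⟩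
    rw [torusSL_mul, ← torusSL_mul (g ^ (2 * M - 1)) g x, ← pow_succ]
    have hM2 : 2 * M - 1 + 1 = 2 * M := by omega
    rw [hM2, h2M]
  -- evaluation of ν'
  have hν'app : ∀ S : Set (Torus d × ℝ), MeasurableSet S →
      ν' S = ∑ y ∈ hfin.toFinset, volume (Prod.mk y ⁻¹' S) := by
    intro S hS
    rw [hν', Measure.finset_sum_apply]
    refine Finset.sum_congr rfl fun y _ => ?_
    rw [Measure.prod_apply hS, lintegral_dirac' _ (measurable_measure_prodMk_left hS)]
  constructor
  · -- invariance
    intro g hg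
    have hcont : Continuous (torusSL (d := d) g) := torusSL_continuous g
    have hactm : Measurable (act χ g) := by
      exact ((hcont.comp continuous_fst).measurable).prodMk (measurable_snd.add_const (χ g))
    have hform : act χ g = Prod.map (torusSL g) (fun t : ℝ => t + χ g) := rfl
    rw [hν']
    have hstep1 : Measure.map (act χ g) (∑ y ∈ hfin.toFinset, (Measure.dirac y).prod volume)
        = ∑ y ∈ hfin.toFinset, Measure.map (act χ g) ((Measure.dirac y).prod volume) := by
      ext s hs
      rw [Measure.map_apply hactm hs, Measure.finset_sum_apply, Measure.finset_sum_apply]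
      exact Finset.sum_congr rfl fun y _ => (Measure.map_apply hactm hs).symm
    have hstep2 : ∀ y : Torus d, Measure.map (act χ g) ((Measure.dirac y).prod volume)
        = (Measure.dirac (torusSL g y)).prod volume := by
      intro y
      rw [hform, ← Measure.map_prod_map _ _ hcont.measurable (measurable_add_const (χ g)),
        Measure.map_dirac' hcont.measurable, map_add_right_eq_self]
    have himg : hfin.toFinset.image (torusSL g) = hfin.toFinset := by
      apply Finset.eq_of_subset_of_card_le
      · intro z hz
        rw [Finset.mem_image] at hz
        obtain ⟨y, hy, rfl⟩ := hz
        exact hGO g hg y hy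
      · rw [Finset.card_image_of_injective _ (torusSL_injective g)]
    calc Measure.map (act χ g) (∑ y ∈ hfin.toFinset, (Measure.dirac y).prod volume)
        = ∑ y ∈ hfin.toFinset, Measure.map (act χ g) ((Measure.dirac y).prod volume) := hstep1
      _ = ∑ y ∈ hfin.toFinset, (Measure.dirac (torusSL g y)).prod volume :=
          Finset.sum_congr rfl fun y _ => hstep2 y
      _ = ∑ z ∈ hfin.toFinset.image (torusSL g), (Measure.dirac z).prod volume := by
          rw [Finset.sum_image fun a _ b _ h => torusSL_injective g h]
      _ = ∑ y ∈ hfin.toFinset, (Measure.dirac y).prod volume := by rw [himg]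
  · -- ergodicity
    intro A hA hinvA
    have hEmeas : ∀ y : Torus d, MeasurableSet (Prod.mk y ⁻¹' A) :=
      fun y => hA.preimage measurable_prodMk_left
    have hfiber : ∀ g ∈ Γ, ∀ y : Torus d, ∀ s : ℝ,
        ((torusSL g y, s) ∈ A ↔ (y, s - χ g) ∈ A) := by
      intro g hg y s
      constructor
      · intro h
        rw [← hinvA g hg] at h
        obtain ⟨⟨z, t⟩, hzt, heq⟩ := h
        have h1 : torusSL g z = torusSL g y := congrArg Prod.fst heq
        have h2 : t + χ g = s := congrArg Prod.snd heq
        have hz : z = y := torusSL_injective g h1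
        subst hz
        have ht : t = s - χ g := by linarith
        rwa [← ht]
      · intro h
        have h2 : act χ g (y, s - χ g) ∈ act χ g '' A := Set.mem_image_of_mem _ h
        rw [hinvA g hg] at h2
        simpa [act, sub_add_cancel] using h2
    have h01 : ∀ y ∈ hfin.toFinset,
        volume (Prod.mk y ⁻¹' A) = 0 ∨ volume (Prod.mk y ⁻¹' A)ᶜ = 0 := by
      intro y hy
      refine zeroOneLaw _ (hEmeas y) _ (hDdense y hy) ?_
      rintro t ⟨g, hg, hgy, rfl⟩ s
      have := hfiber g hg y s
      rw [hgy] at this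
      exact this
    have hshift : ∀ y ∈ hfin.toFinset, ∀ z ∈ hfin.toFinset,
        volume (Prod.mk z ⁻¹' A) = volume (Prod.mk y ⁻¹' A) ∧
        volume (Prod.mk z ⁻¹' A)ᶜ = volume (Prod.mk y ⁻¹' A)ᶜ := by
      intro y hy z hz
      obtain ⟨γ, hγ, hγy⟩ := htransO y hy z hz
      have hset : Prod.mk z ⁻¹' A = (fun s : ℝ => s + (-χ γ)) ⁻¹' (Prod.mk y ⁻¹' A) := by
        ext s
        simp only [Set.mem_preimage]
        rw [← hγy, hfiber γ hγ y s, sub_eq_add_neg]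
      constructor
      · rw [hset, measure_preimage_add_right]
      · rw [hset, ← Set.preimage_compl, measure_preimage_add_right]
    rcases Finset.eq_empty_or_nonempty hfin.toFinset with hFe | ⟨y₀, hy₀⟩
    · left
      rw [hν'app A hA, hFe, Finset.sum_empty]
    · rcases h01 y₀ hy₀ with h | h
      · left
        rw [hν'app A hA]
        refine Finset.sum_eq_zero fun y hy => ?_
        rw [(hshift y₀ hy₀ y hy).1, h]
      · right
        rw [hν'app _ (MeasurableSet.univ.diff hA)]
        refine Finset.sum_eq_zero fun y hy => ?_
        have hpre : Prod.mk y ⁻¹' (Set.univ \ A) = (Prod.mk y ⁻¹' A)ᶜ := by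
          ext s; simp
        rw [hpre, (hshift y₀ hy₀ y hy).2, h]

end
end
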